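/- Let G be a finite group, N ⊲ G with [G:N] prime p, and let χ be an irreducible complex character of G whose restriction to N is irreducible. Then the set of irreducible characters of G restricting to Res(χ,N) is exactly { χ·λ : λ ∈ Irr(G/N) }, and these p characters are pairwise distinct. -/

import Mathlib

/-!
If `Res_N V` is irreducible and `U` has the same restricted character, then `Res_N U ≅ Res_N V`
via some `E`. As `N` is normal, `V.ρ g⁻¹ * E (U.ρ g) E⁻¹` commutes with `N`, so by Schur it is a
scalar `λ g`; `λ` is then a linear character trivial on `N`, and `χ_U = χ_V · λ`. Conversely
`⟨χλ, χλ⟩ = ⟨χ, χ⟩ = 1`, so every twist `χλ` is irreducible.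

If `χ` vanished off `N`, then `1 = ⟨χ, χ⟩_G = [G : N]⁻¹ ⟨χ_N, χ_N⟩_N = [G : N]⁻¹`. So
`χλ₁ = χλ₂` forces `λ₁ g = λ₂ g` for some `g ∉ N`, and the equaliser of `λ₁, λ₂`, strictly
larger than `N`, is all of `G` because `[G : N]` is prime. Finally the `λ` are the characters of
the cyclic group `G ⧸ N` of order `p`.
-/

/-- `χ` is the character of an irreducible (simple) finite-dimensional complex
representation of `H`. -/
def IsIrrChar (H : Type) [Group H] (χ : H → ℂ) : Prop :=
  ∃ V : FDRep ℂ H, CategoryTheory.Simple V ∧ χ = FDRep.character V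

open CategoryTheory

universe u

lemma Subgroup.eq_top_of_lt_of_index_prime {G : Type*} [Group G] {N K : Subgroup G}
    (hp : N.index.Prime) (h : N < K) : K = ⊤ := by
  have : N.FiniteIndex := ⟨hp.ne_zero⟩
  rw [← index_eq_one]
  exact ((Nat.dvd_prime hp).1 (index_dvd_of_le h.le)).resolve_right (index_strictAnti h).ne

lemma ncard_setOf_monoidHom_forall_eq_one {k G : Type*} [Field k] [IsAlgClosed k] [CharZero k]
    [Group G] {N : Subgroup G} [N.Normal] (hp : N.index.Prime) :
    {l : G →* k | ∀ n ∈ N, l n = 1}.ncard = N.index := by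
  have : Fact (Nat.card (G ⧸ N)).Prime := ⟨hp⟩
  have : Finite (G ⧸ N) := Nat.finite_of_card_ne_zero hp.ne_zero
  have : IsCyclic (G ⧸ N) := isCyclic_of_prime_card rfl
  let : CommGroup (G ⧸ N) := IsCyclic.commGroup
  have : NeZero (Monoid.exponent (G ⧸ N) : k) :=
    ⟨Nat.cast_ne_zero.2 Monoid.exponent_ne_zero_of_finite⟩
  have hrange : {l : G →* k | ∀ n ∈ N, l n = 1} =
      Set.range fun f : G ⧸ N →* k => f.comp (QuotientGroup.mk' N) := by
    ext l
    refine ⟨fun hl => ⟨QuotientGroup.lift N l hl, rfl⟩, ?_⟩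
    rintro ⟨f, rfl⟩ n hn
    simp [(QuotientGroup.eq_one_iff n).2 hn]
  rw [hrange, Set.ncard_range_of_injective fun f₁ f₂ h =>
      (MonoidHom.cancel_right (QuotientGroup.mk'_surjective N)).1 h,
    Nat.card_congr MonoidHom.toHomUnitsMulEquiv.toEquiv,
    CommGroup.card_monoidHom_of_hasEnoughRootsOfUnity, Subgroup.index]

namespace Representation

variable {k G W : Type*} [Field k] [Group G] [AddCommGroup W] [Module k W] [Nontrivial W]

lemma apply_ne_zero (σ : Representation k G W) (g : G) : σ g ≠ 0 := by
  intro h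
  have : σ g * σ g⁻¹ = 1 := by rw [← map_mul, mul_inv_cancel, map_one]
  rw [h, zero_mul] at this
  exact zero_ne_one this

lemma exists_monoidHom_of_forall_exists_smul (ρ σ : Representation k G W)
    (h : ∀ g, ∃ c : k, ρ g = c • σ g) : ∃ l : G →* k, ∀ g, ρ g = l g • σ g := by
  choose c hc using h
  have hinj (g : G) : Function.Injective fun a : k => a • σ g :=
    smul_left_injective k (σ.apply_ne_zero g)
  refine ⟨{ toFun := c, map_one' := hinj 1 ?_, map_mul' := fun g h => hinj (g * h) ?_ }, hc⟩
  · change c 1 • σ 1 = 1 • σ 1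
    rw [← hc, map_one, map_one, one_smul]
  · change c (g * h) • σ (g * h) = (c g * c h) • σ (g * h)
    rw [← hc, map_mul, map_mul, hc, hc, smul_mul_smul_comm]

end Representation

namespace FDRep

variable {k G : Type u} [Field k] [Group G]

noncomputable abbrev res {H : Type u} [Group H] (f : H →* G) (V : FDRep k G) : FDRep k H :=
  FDRep.of (V.ρ.comp f)

noncomputable def twist (V : FDRep k G) (l : G →* k) : FDRep k G :=
  FDRep.of
    { toFun g := l g • V.ρ g
      map_one' := by simp
      map_mul' g h := by simp only [map_mul, smul_mul_smul_comm] }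

lemma character_twist (V : FDRep k G) (l : G →* k) (g : G) :
    (V.twist l).character g = V.character g * l g := by
  change LinearMap.trace k V (l g • V.ρ g) = _
  rw [map_smul, smul_eq_mul, mul_comm]
  rfl

lemma nontrivial_of_simple (V : FDRep k G) [Simple V] : Nontrivial V := by
  by_contra h
  rw [not_nontrivial_iff_subsingleton] at h
  exact id_nonzero V (by ext x; exact Subsingleton.elim _ _)

section CharZero

variable [IsAlgClosed k] [CharZero k] [Fintype G]

lemma simple_of_character_eq {V W : FDRep k G} [Simple W] (h : V.character = W.character) :
    Simple V := by
  rw [simple_iff_char_is_norm_one, h, ← simple_iff_char_is_norm_one]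
  infer_instance

open scoped Classical in
lemma nonempty_iso_of_character_eq {V W : FDRep k G} [Simple V] [Simple W]
    (h : V.character = W.character) : Nonempty (V ≅ W) := by
  have := invertibleOfNonzero (NeZero.ne (Nat.card G : k))
  by_contra hVW
  have := char_orthonormal V W
  rw [if_neg hVW, h, (simple_iff_char_is_norm_one W).1 ‹_›, inv_mul_cancel_of_invertible] at this
  exact one_ne_zero this

lemma simple_twist (V : FDRep k G) [Simple V] (l : G →* k) : Simple (V.twist l) := by
  rw [simple_iff_char_is_norm_one]
  have hl (g : G) : l g * l g⁻¹ = 1 := by rw [← map_mul, mul_inv_cancel, map_one]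
  simp_rw [character_twist, mul_mul_mul_comm, hl, mul_one]
  exact (simple_iff_char_is_norm_one V).1 ‹_›

lemma exists_notMem_character_ne_zero {N : Subgroup G} (hN : N ≠ ⊤) (V : FDRep k G) [Simple V]
    [Simple (V.res N.subtype)] : ∃ g ∉ N, V.character g ≠ 0 := by
  classical
  by_contra! hvanish
  have hsum : ∑ n : N, (V.res N.subtype).character n * (V.res N.subtype).character n⁻¹ =
      ∑ g, V.character g * V.character g⁻¹ := by
    rw [← Finset.sum_filter_of_ne (p := (· ∈ N)) fun g _ hg =>
      not_not.1 fun hgN => hg (by simp [hvanish g hgN])]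
    exact (Finset.sum_subtype _ (fun g => by simp) fun g => V.character g * V.character g⁻¹).symm
  rw [(simple_iff_char_is_norm_one (V.res N.subtype)).1 ‹_›, (simple_iff_char_is_norm_one V).1 ‹_›,
    Nat.cast_inj, Subgroup.card_eq_iff_eq_top] at hsum
  exact hN hsum

lemma eq_of_character_mul_eq {N : Subgroup G} (hp : N.index.Prime) (V : FDRep k G) [Simple V]
    [Simple (V.res N.subtype)] {l₁ l₂ : G →* k} (h₁ : ∀ n ∈ N, l₁ n = 1) (h₂ : ∀ n ∈ N, l₂ n = 1)
    (h : ∀ g, V.character g * l₁ g = V.character g * l₂ g) : l₁ = l₂ := by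
  have hN : N ≠ ⊤ := by
    rintro rfl
    exact Nat.not_prime_one (by simpa using hp)
  obtain ⟨g, hgN, hg⟩ := exists_notMem_character_ne_zero hN V
  have hlt : N < l₁.eqLocus l₂ := SetLike.lt_iff_le_and_exists.2
    ⟨fun n hn => (h₁ n hn).trans (h₂ n hn).symm, g, mul_left_cancel₀ hg (h g), hgN⟩
  have htop := Subgroup.eq_top_of_lt_of_index_prime hp hlt
  exact MonoidHom.ext fun x => (Subgroup.eq_top_iff' _).1 htop x

end CharZero

lemma exists_eq_smul_one_of_commute [IsAlgClosed k] (W : FDRep k G) [Simple W]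
    (A : Module.End k W) (hA : ∀ g, A * W.ρ g = W.ρ g * A) : ∃ c : k, A = c • 1 := by
  let f : W ⟶ W := ⟨FGModuleCat.ofHom A, fun g => by ext x; exact LinearMap.congr_fun (hA g) x⟩
  obtain ⟨c, hc⟩ := endomorphism_simple_eq_smul_id k f
  exact ⟨c, LinearMap.ext fun x => (congr_arg (fun φ : W ⟶ W => φ.hom x) hc).symm⟩

variable [IsAlgClosed k] {N : Subgroup G} [N.Normal] {U V : FDRep k G} [Simple (V.res N.subtype)]

lemma exists_conj_eq_smul_of_iso_res (e : U.res N.subtype ≅ V.res N.subtype) (g : G) :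
    ∃ c : k, (isoToLinearEquiv e).conjRingEquiv (U.ρ g) = c • V.ρ g := by
  set φ := (isoToLinearEquiv e).conjRingEquiv
  have hφ (n : N) : φ (U.ρ n) = V.ρ n := (Iso.conj_ρ e n).symm
  obtain ⟨c, hc⟩ := exists_eq_smul_one_of_commute (V.res N.subtype) (V.ρ g⁻¹ * φ (U.ρ g))
    fun n => by
      have hn : g * n * g⁻¹ ∈ N := Subgroup.Normal.conj_mem ‹_› _ n.2 g
      calc V.ρ g⁻¹ * φ (U.ρ g) * V.ρ n = V.ρ g⁻¹ * φ (U.ρ (g * n * g⁻¹ * g)) := by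
            rw [inv_mul_cancel_right, map_mul, map_mul, ← hφ, mul_assoc]
        _ = V.ρ n * (V.ρ g⁻¹ * φ (U.ρ g)) := by
            rw [map_mul, map_mul, hφ ⟨_, hn⟩, ← mul_assoc, ← mul_assoc, ← map_mul, ← map_mul]
            congr 2
            group
  refine ⟨c, ?_⟩
  calc φ (U.ρ g) = V.ρ g * (V.ρ g⁻¹ * φ (U.ρ g)) := by
        rw [← mul_assoc, ← map_mul, mul_inv_cancel, map_one, one_mul]
    _ = c • V.ρ g := by rw [hc, mul_smul_comm, mul_one]

lemma exists_character_eq_mul_of_iso_res (e : U.res N.subtype ≅ V.res N.subtype) :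
    ∃ l : G →* k, (∀ n ∈ N, l n = 1) ∧ ∀ g, U.character g = V.character g * l g := by
  set E := isoToLinearEquiv e
  have : Nontrivial V := nontrivial_of_simple (V.res N.subtype)
  obtain ⟨l, hl⟩ := Representation.exists_monoidHom_of_forall_exists_smul
    (E.conjRingEquiv.toMonoidHom.comp U.ρ) V.ρ (exists_conj_eq_smul_of_iso_res e)
  refine ⟨l, fun n hn => smul_left_injective k (Representation.apply_ne_zero V.ρ n) ?_, fun g => ?_⟩
  · change l n • V.ρ n = (1 : k) • V.ρ n
    rw [← hl, one_smul]
    exact (Iso.conj_ρ e ⟨n, hn⟩).symm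
  · calc U.character g = LinearMap.trace k V (E.conj (U.ρ g)) := (LinearMap.trace_conj' _ _).symm
      _ = V.character g * l g := by
        rw [show E.conj (U.ρ g) = l g • V.ρ g from hl g, map_smul, smul_eq_mul, mul_comm]
        rfl

lemma exists_character_eq_mul_of_forall_mem_character_eq [CharZero k] [Fintype G]
    (h : ∀ n ∈ N, U.character n = V.character n) :
    ∃ l : G →* k, (∀ n ∈ N, l n = 1) ∧ ∀ g, U.character g = V.character g * l g := by
  classical
  have hUV : (U.res N.subtype).character = (V.res N.subtype).character := funext fun n => h n n.2
  have : Simple (U.res N.subtype) := simple_of_character_eq hUV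
  obtain ⟨e⟩ := nonempty_iso_of_character_eq hUV
  exact exists_character_eq_mul_of_iso_res e

end FDRep

/-- **Gallagher's theorem for a cyclic quotient of prime order.**  Let `G` be
finite, `N ⊴ G` of prime index `p`, and `χ ∈ Irr(G)` with `Res(χ,N)` irreducible.
Then the irreducible characters of `G` restricting to `Res(χ,N)` are exactly the
products `χ·l` where `l` runs over the linear characters of `G` with `N ≤ ker l`
(i.e. over `Irr(G/N)`); these characters are pairwise distinct, and there are
exactly `p` of them. -/
theorem gallagher_prime_index
    (G : Type) [Group G] [Finite G] (N : Subgroup G) [N.Normal]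
    (hp : Nat.Prime N.index)
    (χ : G → ℂ) (hχ : IsIrrChar G χ)
    (hres : IsIrrChar ↥N (fun n : ↥N => χ n)) :
    ({ψ : G → ℂ | IsIrrChar G ψ ∧ ∀ n ∈ N, ψ n = χ n}
        = {ψ : G → ℂ | ∃ l : G →* ℂ, (∀ n ∈ N, l n = 1) ∧ ψ = fun x => χ x * l x}) ∧
      (∀ l₁ l₂ : G →* ℂ, (∀ n ∈ N, l₁ n = 1) → (∀ n ∈ N, l₂ n = 1) →
        (fun x => χ x * l₁ x) = (fun x => χ x * l₂ x) → l₁ = l₂) ∧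
      {ψ : G → ℂ | IsIrrChar G ψ ∧ ∀ n ∈ N, ψ n = χ n}.ncard = N.index := by
  classical
  have := Fintype.ofFinite G
  obtain ⟨V, hV, rfl⟩ := hχ
  obtain ⟨X, hX, hXV⟩ := hres
  have : Simple (V.res N.subtype) := FDRep.simple_of_character_eq hXV
  have hinj : ∀ l₁ l₂ : G →* ℂ, (∀ n ∈ N, l₁ n = 1) → (∀ n ∈ N, l₂ n = 1) →
      (fun x => V.character x * l₁ x) = (fun x => V.character x * l₂ x) → l₁ = l₂ :=
    fun l₁ l₂ h₁ h₂ h => FDRep.eq_of_character_mul_eq hp V h₁ h₂ (congrFun h)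
  have hirr : {ψ | IsIrrChar G ψ ∧ ∀ n ∈ N, ψ n = V.character n} =
      {ψ | ∃ l : G →* ℂ, (∀ n ∈ N, l n = 1) ∧ ψ = fun x => V.character x * l x} := by
    ext ψ
    constructor
    · rintro ⟨⟨U, -, rfl⟩, hUV⟩
      obtain ⟨l, hl, hUl⟩ := FDRep.exists_character_eq_mul_of_forall_mem_character_eq hUV
      exact ⟨l, hl, funext hUl⟩
    · rintro ⟨l, hl, rfl⟩
      exact ⟨⟨V.twist l, V.simple_twist l, funext fun g => (V.character_twist l g).symm⟩,
        fun n hn => by simp [hl n hn]⟩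
  refine ⟨hirr, hinj, ?_⟩
  calc _ = ((fun l x => V.character x * l x) '' {l : G →* ℂ | ∀ n ∈ N, l n = 1}).ncard := by
        rw [hirr]
        congr 1
        ext ψ
        simp [eq_comm]
    _ = N.index := by
        rw [Set.InjOn.ncard_image (s := {l : G →* ℂ | ∀ n ∈ N, l n = 1})
          fun l₁ h₁ l₂ h₂ => hinj l₁ l₂ h₁ h₂, ncard_setOf_monoidHom_forall_eq_one hp]
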